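/- Let 1 < p < ∞ and let h, g ∈ L¹(ℝ) ∩ L^p(ℝ). Then the function f on ℝ² defined by f(q,p) = h(q)g(p) (which lies in L¹(ℝ²) ∩ L^p(ℝ²)) has the property that the linear span of its translates is dense in L^p(ℝ²) if and only if the spans of the translates of h and of g are both dense in L^p(ℝ). -/

import Mathlib

/-!
If `u(x)θ(y)`, with `θ = 1_{[0,1]}`, is approximated in `L^p(ℝ²)` by a combination `T` of
translates of `h ⊗ g`, then `x ↦ ∫ T(x,y) θ(y) dy` is a combination of translates of `h`, and by
Hölder's inequality in `y` (`‖θ‖_q = 1`, `θ² = θ`, `∫ θ = 1`) it approximates `u` at least as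
well; the factor `g` is handled by swapping the coordinates.

Conversely, approximants of `φ` and `ψ` give approximants of `φ ⊗ ψ`, so the `L^p`-closure of
the span of the translates of `h ⊗ g` contains the indicators of open boxes. By
inclusion–exclusion it contains the indicators of finite unions of boxes; by regularity of
Lebesgue measure these approximate every set of finite measure, and simple functions are dense
in `L^p`.
-/

open MeasureTheory
open scoped ENNReal

noncomputable section

/-- The linear span of the translates of a function on `ℝ`. -/
def spanTrans1 (f : ℝ → ℂ) : Set (ℝ → ℂ) :=
  ↑(Submodule.span ℂ {g : ℝ → ℂ | ∃ x : ℝ, g = fun y => f (y - x)})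

/-- The linear span of the translates of a function on `ℝ²`. -/
def spanTrans2 (f : ℝ × ℝ → ℂ) : Set (ℝ × ℝ → ℂ) :=
  ↑(Submodule.span ℂ {g : ℝ × ℝ → ℂ | ∃ x : ℝ × ℝ, g = fun y => f (y - x)})

/-- `f` is `p`-regular on `ℝ`: the span of its translates is dense in `L^p(ℝ)`. -/
def pReg1 (p : ℝ≥0∞) (f : ℝ → ℂ) : Prop :=
  ∀ g : ℝ → ℂ, MemLp g p volume → ∀ ε > (0:ℝ), ∃ h ∈ spanTrans1 f,
    eLpNorm (g - h) p volume < ENNReal.ofReal ε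

/-- `f` is `p`-regular on `ℝ²`: the span of its translates is dense in `L^p(ℝ²)`. -/
def pReg2 (p : ℝ≥0∞) (f : ℝ × ℝ → ℂ) : Prop :=
  ∀ g : ℝ × ℝ → ℂ, MemLp g p volume → ∀ ε > (0:ℝ), ∃ h ∈ spanTrans2 f,
    eLpNorm (g - h) p volume < ENNReal.ofReal ε

open Set TopologicalSpace
open scoped symmDiff

namespace MeasureTheory

section LpClosure

variable {α : Type*} [MeasurableSpace α]

def lpClosure (p : ℝ≥0∞) (μ : Measure α) (M : Submodule ℂ (α → ℂ)) : Submodule ℂ (α → ℂ) where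
  carrier := {u | MemLp u p μ ∧
    ∀ ε : ℝ≥0∞, 0 < ε → ∃ v ∈ M, MemLp v p μ ∧ eLpNorm (u - v) p μ < ε}
  zero_mem' := ⟨MemLp.zero, fun ε hε => ⟨0, M.zero_mem, MemLp.zero, by simpa using hε⟩⟩
  add_mem' := by
    rintro u₁ u₂ ⟨hu₁, happ₁⟩ ⟨hu₂, happ₂⟩
    refine ⟨hu₁.add hu₂, fun ε hε => ?_⟩
    obtain ⟨η, hη, hhalf⟩ := exists_Lp_half ℂ μ p hε.ne'
    obtain ⟨v₁, hv₁M, hv₁, hlt₁⟩ := happ₁ η hη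
    obtain ⟨v₂, hv₂M, hv₂, hlt₂⟩ := happ₂ η hη
    refine ⟨v₁ + v₂, M.add_mem hv₁M hv₂M, hv₁.add hv₂, ?_⟩
    rw [add_sub_add_comm]
    exact hhalf _ _ (hu₁.sub hv₁).1 (hu₂.sub hv₂).1 hlt₁.le hlt₂.le
  smul_mem' := by
    rintro c u ⟨hu, happ⟩
    refine ⟨hu.const_smul c, fun ε hε => ?_⟩
    obtain ⟨η, hη, hηc⟩ := ENNReal.exists_pos_mul_lt enorm_ne_top hε.ne' (a := ‖c‖ₑ)
    obtain ⟨v, hvM, hv, hlt⟩ := happ η hη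
    refine ⟨c • v, M.smul_mem c hvM, hv.const_smul c, ?_⟩
    rw [← smul_sub, eLpNorm_const_smul, mul_comm]
    exact lt_of_le_of_lt (by gcongr) hηc

variable {p : ℝ≥0∞} {μ : Measure α} {M : Submodule ℂ (α → ℂ)}

theorem mem_lpClosure_of_mem {v : α → ℂ} (hvM : v ∈ M) (hv : MemLp v p μ) :
    v ∈ lpClosure p μ M :=
  ⟨hv, fun ε hε => ⟨v, hvM, hv, by simpa using hε⟩⟩

theorem mem_lpClosure_of_forall_exists {u : α → ℂ} (hu : MemLp u p μ)
    (happ : ∀ ε : ℝ≥0∞, 0 < ε → ∃ w ∈ lpClosure p μ M, eLpNorm (u - w) p μ ≤ ε) :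
    u ∈ lpClosure p μ M := by
  refine ⟨hu, fun ε hε => ?_⟩
  obtain ⟨η, hη, hhalf⟩ := exists_Lp_half ℂ μ p hε.ne'
  obtain ⟨w, ⟨hw, hwapp⟩, hle⟩ := happ η hη
  obtain ⟨v, hvM, hv, hlt⟩ := hwapp η hη
  refine ⟨v, hvM, hv, ?_⟩
  rw [← sub_add_sub_cancel u w v]
  exact hhalf _ _ (hu.sub hw).1 (hw.sub hv).1 hle hlt.le

theorem mem_lpClosure_iff (hM : ∀ v ∈ M, MemLp v p μ) {u : α → ℂ} :
    u ∈ lpClosure p μ M ↔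
      MemLp u p μ ∧ ∀ ε > (0 : ℝ), ∃ v ∈ M, eLpNorm (u - v) p μ < ENNReal.ofReal ε := by
  refine and_congr_right fun _ => ⟨fun happ ε hε => ?_, fun happ ε hε => ?_⟩
  · obtain ⟨v, hvM, -, hlt⟩ := happ _ (ENNReal.ofReal_pos.2 hε)
    exact ⟨v, hvM, hlt⟩
  · obtain ⟨r, -, hr, hrε⟩ := ENNReal.lt_iff_exists_real_btwn.1 hε
    obtain ⟨v, hvM, hlt⟩ := happ r (ENNReal.ofReal_pos.1 hr)
    exact ⟨v, hvM, hM v hvM, hlt.trans hrε⟩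

theorem map_mem_lpClosure {β : Type*} [MeasurableSpace β] {ν : Measure β}
    {N : Submodule ℂ (β → ℂ)} {F : (α → ℂ) → β → ℂ} {K : ℝ≥0∞} (hK : K ≠ ∞)
    (hF : ∀ u, MemLp u p μ → MemLp (F u) p ν)
    (hFK : ∀ u v, MemLp u p μ → MemLp v p μ → eLpNorm (F u - F v) p ν ≤ K * eLpNorm (u - v) p μ)
    (hMN : ∀ v ∈ M, MemLp v p μ → F v ∈ lpClosure p ν N) {u : α → ℂ}
    (hu : u ∈ lpClosure p μ M) : F u ∈ lpClosure p ν N := by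
  refine mem_lpClosure_of_forall_exists (hF u hu.1) fun ε hε => ?_
  obtain ⟨η, hη, hηK⟩ := ENNReal.exists_pos_mul_lt hK hε.ne'
  obtain ⟨v, hvM, hv, hlt⟩ := hu.2 η hη
  refine ⟨F v, hMN v hvM hv, (hFK u v hu.1 hv).trans ?_⟩
  calc K * eLpNorm (u - v) p μ ≤ K * η := by gcongr
    _ ≤ ε := by rw [mul_comm]; exact hηK.le

end LpClosure

section Tensor

variable {α β : Type*} [MeasurableSpace α] [MeasurableSpace β] {μ : Measure α} {ν : Measure β}
  [SFinite ν] {p : ℝ≥0∞} {a : α → ℂ} {b : β → ℂ}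

theorem eLpNorm_mul_prod (hp : p ≠ ∞) (ha : AEStronglyMeasurable a μ)
    (hb : AEStronglyMeasurable b ν) :
    eLpNorm (fun z : α × β => a z.1 * b z.2) p (μ.prod ν) = eLpNorm a p μ * eLpNorm b p ν := by
  rcases eq_or_ne p 0 with rfl | hp0
  · simp
  simp only [eLpNorm_eq_lintegral_rpow_enorm_toReal hp0 hp, enorm_mul,
    ENNReal.mul_rpow_of_nonneg _ _ ENNReal.toReal_nonneg]
  rw [lintegral_prod_mul (ha.enorm.pow_const _) (hb.enorm.pow_const _),
    ENNReal.mul_rpow_of_nonneg _ _ (by positivity)]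

theorem MemLp.mul_prod (hp : p ≠ ∞) (ha : MemLp a p μ) (hb : MemLp b p ν) :
    MemLp (fun z : α × β => a z.1 * b z.2) p (μ.prod ν) :=
  ⟨ha.1.comp_fst.mul hb.1.comp_snd, by
    rw [eLpNorm_mul_prod hp ha.1 hb.1]; exact ENNReal.mul_lt_top ha.2 hb.2⟩

theorem mul_prod_mem_lpClosure (hp : p ≠ ∞) {M : Submodule ℂ (α → ℂ)}
    {N : Submodule ℂ (β → ℂ)} {P : Submodule ℂ (α × β → ℂ)}
    (hMN : ∀ a ∈ M, ∀ b ∈ N, (fun z : α × β => a z.1 * b z.2) ∈ P)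
    (ha : a ∈ lpClosure p μ M) (hb : b ∈ lpClosure p ν N) :
    (fun z : α × β => a z.1 * b z.2) ∈ lpClosure p (μ.prod ν) P := by
  have left_mem : ∀ a' ∈ M, MemLp a' p μ →
      (fun z : α × β => a' z.1 * b z.2) ∈ lpClosure p (μ.prod ν) P := by
    intro a' ha'M ha'
    refine map_mem_lpClosure (F := fun (b' : β → ℂ) (z : α × β) => a' z.1 * b' z.2)
      ha'.2.ne (fun b' hb' => ha'.mul_prod hp hb') (fun b₁ b₂ hb₁ hb₂ => ?_)
      (fun b' hb'M hb' => mem_lpClosure_of_mem (hMN a' ha'M b' hb'M) (ha'.mul_prod hp hb')) hb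
    rw [← eLpNorm_mul_prod hp ha'.1 (hb₁.sub hb₂).1]
    exact (congrArg (eLpNorm · p _) (funext fun z => (mul_sub _ _ _).symm)).le
  refine map_mem_lpClosure (F := fun (a' : α → ℂ) (z : α × β) => a' z.1 * b z.2) hb.1.2.ne
    (fun a' ha' => ha'.mul_prod hp hb.1) (fun a₁ a₂ ha₁ ha₂ => ?_) left_mem ha
  rw [mul_comm, ← eLpNorm_mul_prod hp (ha₁.sub ha₂).1 hb.1.1]
  exact (congrArg (eLpNorm · p _) (funext fun z => (sub_mul _ _ _).symm)).le

end Tensor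

theorem eLpNorm_ofReal_eq_lintegral {γ : Type*} [MeasurableSpace γ] {ρ : Measure γ} {r : ℝ}
    (hr : 0 < r) (f : γ → ℂ) :
    eLpNorm f (ENNReal.ofReal r) ρ = (∫⁻ z, ‖f z‖ₑ ^ r ∂ρ) ^ (1 / r) := by
  rw [eLpNorm_eq_lintegral_rpow_enorm_toReal (by simpa using hr) ENNReal.ofReal_ne_top,
    ENNReal.toReal_ofReal hr.le]

theorem eLpNorm_integral_mul_le {α β : Type*} [MeasurableSpace α] [MeasurableSpace β]
    {μ : Measure α} {ν : Measure β} [SFinite ν] {p q : ℝ} (hpq : p.HolderConjugate q)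
    {D : α × β → ℂ} (hD : AEStronglyMeasurable D (μ.prod ν)) {θ : β → ℂ}
    (hθ : MemLp θ (ENNReal.ofReal q) ν) :
    eLpNorm (fun x => ∫ y, D (x, y) * θ y ∂ν) (ENNReal.ofReal p) μ
      ≤ eLpNorm D (ENNReal.ofReal p) (μ.prod ν) * eLpNorm θ (ENNReal.ofReal q) ν := by
  have hp0 : 0 < p := hpq.pos
  rw [eLpNorm_ofReal_eq_lintegral hp0, eLpNorm_ofReal_eq_lintegral hp0,
    eLpNorm_ofReal_eq_lintegral hpq.symm.pos]
  set Kq := (∫⁻ y, ‖θ y‖ₑ ^ q ∂ν) ^ (1 / q)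
  have hKq : Kq ^ p ≠ ∞ :=
    ENNReal.rpow_ne_top_of_nonneg hp0.le (eLpNorm_ofReal_eq_lintegral hpq.symm.pos θ ▸ hθ.2).ne
  have pointwise_holder : ∀ᵐ x ∂μ,
      ‖∫ y, D (x, y) * θ y ∂ν‖ₑ ^ p ≤ (∫⁻ y, ‖D (x, y)‖ₑ ^ p ∂ν) * Kq ^ p := by
    filter_upwards [hD.prodMk_left] with x hx
    calc ‖∫ y, D (x, y) * θ y ∂ν‖ₑ ^ p
        ≤ (∫⁻ y, ‖D (x, y)‖ₑ * ‖θ y‖ₑ ∂ν) ^ p := by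
          gcongr
          simpa only [enorm_mul] using
            enorm_integral_le_lintegral_enorm (fun y => D (x, y) * θ y)
      _ ≤ ((∫⁻ y, ‖D (x, y)‖ₑ ^ p ∂ν) ^ (1 / p) * Kq) ^ p := by
          gcongr
          exact ENNReal.lintegral_mul_le_Lp_mul_Lq ν hpq hx.enorm hθ.1.enorm
      _ = (∫⁻ y, ‖D (x, y)‖ₑ ^ p ∂ν) * Kq ^ p := by
          rw [ENNReal.mul_rpow_of_nonneg _ _ hp0.le, ← ENNReal.rpow_mul,
            one_div_mul_cancel hp0.ne', ENNReal.rpow_one]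
  calc (∫⁻ x, ‖∫ y, D (x, y) * θ y ∂ν‖ₑ ^ p ∂μ) ^ (1 / p)
      ≤ (∫⁻ x, (∫⁻ y, ‖D (x, y)‖ₑ ^ p ∂ν) * Kq ^ p ∂μ) ^ (1 / p) := by
        gcongr ?_ ^ _
        exact lintegral_mono_ae pointwise_holder
    _ = ((∫⁻ z, ‖D z‖ₑ ^ p ∂μ.prod ν) * Kq ^ p) ^ (1 / p) := by
        rw [lintegral_mul_const' _ _ hKq, lintegral_prod _ (hD.enorm.pow_const p)]
    _ = (∫⁻ z, ‖D z‖ₑ ^ p ∂μ.prod ν) ^ (1 / p) * Kq := by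
        rw [ENNReal.mul_rpow_of_nonneg _ _ (by positivity), ← ENNReal.rpow_mul,
          mul_one_div_cancel hp0.ne', ENNReal.rpow_one]

theorem _root_.TopologicalSpace.IsTopologicalBasis.exists_finset_biUnion_between {X : Type*}
    [TopologicalSpace X] {B : Set (Set X)} (hB : IsTopologicalBasis B) {K U : Set X}
    (hK : IsCompact K) (hU : IsOpen U) (hKU : K ⊆ U) :
    ∃ (t : Finset X) (f : X → Set X), (∀ x ∈ t, f x ∈ B) ∧ K ⊆ ⋃ x ∈ t, f x ∧
      ⋃ x ∈ t, f x ⊆ U := by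
  choose! f hfB hxf hfU using fun x (hx : x ∈ K) => hB.exists_subset_of_mem_open (hKU hx) hU
  obtain ⟨t, htK, hKt⟩ := hK.elim_nhds_subcover f fun x hx =>
    (hB.isOpen (hfB x hx)).mem_nhds (hxf x hx)
  exact ⟨t, f, fun x hx => hfB x (htK x hx), hKt,
    iUnion₂_subset fun x hx => hfU x (htK x hx)⟩

theorem indicator_biUnion_mem {α ι G : Type*} [AddCommGroup G] [DecidableEq ι]
    (A : AddSubgroup (α → G)) (c : G) {B : Set (Set α)} (hB : ∀ s ∈ B, ∀ t ∈ B, s ∩ t ∈ B)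
    (hBA : ∀ s ∈ B, s.indicator (fun _ => c) ∈ A) (t : Finset ι) (f : ι → Set α)
    (hf : ∀ i ∈ t, f i ∈ B) : (⋃ i ∈ t, f i).indicator (fun _ => c) ∈ A := by
  induction t using Finset.induction_on generalizing f with
  | empty =>
    simp only [Finset.notMem_empty, iUnion_of_empty, iUnion_empty, indicator_empty]
    exact A.zero_mem
  | insert i t _ ih =>
    have hft : ∀ j ∈ t, f j ∈ B := fun j hj => hf j (Finset.mem_insert_of_mem hj)
    have hfi : f i ∈ B := hf i (Finset.mem_insert_self i t)
    have inclusion_exclusion : (⋃ j ∈ insert i t, f j).indicator (fun _ => c)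
        = (f i).indicator (fun _ => c) + (⋃ j ∈ t, f j).indicator (fun _ => c)
          - (⋃ j ∈ t, f i ∩ f j).indicator (fun _ => c) := by
      funext x
      rw [Finset.set_biUnion_insert, ← inter_iUnion₂, Pi.sub_apply, Pi.add_apply,
        ← indicator_union_add_inter_apply, add_sub_cancel_right]
    rw [inclusion_exclusion]
    exact A.sub_mem (A.add_mem (hBA _ hfi) (ih f hft))
      (ih _ fun j hj => hB _ hfi _ (hft j hj))

section Regular

variable {X : Type*} [TopologicalSpace X] [MeasurableSpace X] [OpensMeasurableSpace X]
  [T2Space X] {μ : Measure X} [μ.OuterRegular] [μ.InnerRegularCompactLTTop]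
  {B : Set (Set X)} {p : ℝ≥0∞} {M : Submodule ℂ (X → ℂ)}

theorem exists_finset_biUnion_measure_symmDiff_lt (hB : IsTopologicalBasis B) {s : Set X}
    (hs : MeasurableSet s) (hμs : μ s ≠ ∞) {ε : ℝ≥0∞} (hε : ε ≠ 0) :
    ∃ (t : Finset X) (f : X → Set X), (∀ x ∈ t, f x ∈ B) ∧ μ (s ∆ ⋃ x ∈ t, f x) < ε := by
  obtain ⟨U, hsU, hU, -, hμU⟩ := hs.exists_isOpen_sdiff_lt hμs (ENNReal.half_pos hε).ne'
  obtain ⟨K, hKs, hK, hμK⟩ := hs.exists_isCompact_sdiff_lt hμs (ENNReal.half_pos hε).ne'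
  obtain ⟨t, f, hfB, hKV, hVU⟩ :=
    hB.exists_finset_biUnion_between hK hU (hKs.trans hsU)
  refine ⟨t, f, hfB, ?_⟩
  calc μ (s ∆ ⋃ x ∈ t, f x) ≤ μ ((s \ K) ∪ (U \ s)) := by
        refine measure_mono fun x hx => ?_
        rcases mem_symmDiff.1 hx with ⟨hxs, hxV⟩ | ⟨hxV, hxs⟩
        · exact Or.inl ⟨hxs, fun hxK => hxV (hKV hxK)⟩
        · exact Or.inr ⟨hVU hxV, hxs⟩
    _ ≤ μ (s \ K) + μ (U \ s) := measure_union_le _ _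
    _ < ε / 2 + ε / 2 := ENNReal.add_lt_add hμK hμU
    _ = ε := ENNReal.add_halves ε

theorem indicator_mem_lpClosure (hp0 : p ≠ 0) (hp : p ≠ ∞) (hB : IsTopologicalBasis B)
    (hBinter : ∀ s ∈ B, ∀ t ∈ B, s ∩ t ∈ B)
    (hBM : ∀ s ∈ B, s.indicator (fun _ => (1 : ℂ)) ∈ lpClosure p μ M) {s : Set X}
    (hs : MeasurableSet s) (hμs : μ s ≠ ∞) :
    s.indicator (fun _ => (1 : ℂ)) ∈ lpClosure p μ M := by
  classical
  refine mem_lpClosure_of_forall_exists (memLp_indicator_const p hs 1 (Or.inr hμs))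
    fun ε hε => ?_
  have hp_pos : 0 < p.toReal := ENNReal.toReal_pos hp0 hp
  obtain ⟨t, f, hfB, hμ⟩ := exists_finset_biUnion_measure_symmDiff_lt hB hs hμs
    (ENNReal.rpow_pos_of_nonneg hε hp_pos.le).ne'
  have hV : MeasurableSet (⋃ x ∈ t, f x) :=
    t.measurableSet_biUnion fun x hx => (hB.isOpen (hfB x hx)).measurableSet
  refine ⟨_, indicator_biUnion_mem (lpClosure p μ M).toAddSubgroup 1 hBinter hBM t f hfB, ?_⟩
  rw [eLpNorm_indicator_sub_indicator, eLpNorm_indicator_const (hs.symmDiff hV) hp0 hp,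
    enorm_one, one_mul, one_div, ENNReal.rpow_inv_le_iff hp_pos]
  exact hμ.le

theorem mem_lpClosure_of_isTopologicalBasis (hp0 : p ≠ 0) (hp : p ≠ ∞)
    (hB : IsTopologicalBasis B) (hBinter : ∀ s ∈ B, ∀ t ∈ B, s ∩ t ∈ B)
    (hBM : ∀ s ∈ B, s.indicator (fun _ => (1 : ℂ)) ∈ lpClosure p μ M) {u : X → ℂ}
    (hu : MemLp u p μ) : u ∈ lpClosure p μ M := by
  have indicator_mem : ∀ (c : ℂ) ⦃s : Set X⦄, MeasurableSet s → μ s < ∞ →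
      s.indicator (fun _ => c) ∈ lpClosure p μ M := by
    intro c s hs hμs
    have : s.indicator (fun _ => c) = c • s.indicator (fun _ => (1 : ℂ)) := by
      funext x; by_cases hx : x ∈ s <;> simp [hx]
    rw [this]
    exact (lpClosure p μ M).smul_mem c
      (indicator_mem_lpClosure hp0 hp hB hBinter hBM hs hμs.ne)
  refine mem_lpClosure_of_forall_exists hu fun ε hε => ?_
  obtain ⟨w, hw, hwM⟩ := hu.induction_dense hp (· ∈ lpClosure p μ M)
    (fun c s hs hμs δ _ => ⟨s.indicator fun _ => c, by simp, indicator_mem c hs hμs⟩)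
    (fun _ _ => add_mem) (fun _ hw => hw.1.1) hε.ne'
  exact ⟨w, hwM, hw⟩

end Regular

section Translates

variable {G H : Type*}

/-- `spanTrans1 f` and `spanTrans2 f` are the carriers of `translateSpan f`. -/
def translateSpan [Sub G] (f : G → ℂ) : Submodule ℂ (G → ℂ) :=
  Submodule.span ℂ {g | ∃ x : G, g = fun y => f (y - x)}

theorem memLp_of_mem_translateSpan [AddGroup G] [MeasurableSpace G] [MeasurableAdd G]
    {μ : Measure G} [μ.IsAddRightInvariant] {p : ℝ≥0∞} {f : G → ℂ} (hf : MemLp f p μ)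
    {v : G → ℂ} (hv : v ∈ translateSpan f) : MemLp v p μ := by
  induction hv using Submodule.span_induction with
  | mem v hv =>
    obtain ⟨x, rfl⟩ := hv
    exact hf.comp_measurePreserving (measurePreserving_sub_right μ x)
  | zero => exact MemLp.zero
  | add _ _ _ _ hv₁ hv₂ => exact hv₁.add hv₂
  | smul c _ _ hv => exact hv.const_smul c

theorem mul_prod_mem_translateSpan [Sub G] [Sub H] {h : G → ℂ} {g : H → ℂ} {a : G → ℂ}
    {b : H → ℂ} (ha : a ∈ translateSpan h) (hb : b ∈ translateSpan g) :
    (fun z : G × H => a z.1 * b z.2) ∈ translateSpan (fun z : G × H => h z.1 * g z.2) := by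
  let tensor : (G → ℂ) →ₗ[ℂ] (H → ℂ) →ₗ[ℂ] G × H → ℂ :=
    (LinearMap.mul ℂ (G × H → ℂ)).compl₁₂ (LinearMap.funLeft ℂ ℂ Prod.fst)
      (LinearMap.funLeft ℂ ℂ Prod.snd)
  have hmap : Submodule.map₂ tensor (translateSpan h) (translateSpan g)
      ≤ translateSpan (fun z : G × H => h z.1 * g z.2) := by
    rw [translateSpan, translateSpan, Submodule.map₂_span_span]
    refine Submodule.span_mono ?_
    rintro _ ⟨_, ⟨s, rfl⟩, _, ⟨t, rfl⟩, rfl⟩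
    exact ⟨(s, t), rfl⟩
  exact hmap (Submodule.apply_mem_map₂ tensor ha hb)

theorem comp_swap_mem_translateSpan [Sub G] [Sub H] {f : G × H → ℂ} {v : G × H → ℂ}
    (hv : v ∈ translateSpan f) :
    (fun z : H × G => v z.swap) ∈ translateSpan (fun z : H × G => f z.swap) := by
  have hmap : (translateSpan f).map (LinearMap.funLeft ℂ ℂ Prod.swap)
      ≤ translateSpan (fun z : H × G => f z.swap) := by
    rw [translateSpan, translateSpan, ← Submodule.span_image]
    refine Submodule.span_mono ?_
    rintro _ ⟨_, ⟨x, rfl⟩, rfl⟩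
    exact ⟨x.swap, rfl⟩
  exact hmap (Submodule.mem_map_of_mem hv)

theorem integral_mul_mem_translateSpan [Sub G] [Sub H] [MeasurableSpace H]
    {ν : Measure H} {h : G → ℂ} {g θ : H → ℂ}
    (hgθ : ∀ t, Integrable (fun y => g (y - t) * θ y) ν) {T : G × H → ℂ}
    (hT : T ∈ translateSpan (fun z : G × H => h z.1 * g z.2)) :
    (∀ x, Integrable (fun y => T (x, y) * θ y) ν) ∧
      (fun x => ∫ y, T (x, y) * θ y ∂ν) ∈ translateSpan h := by
  induction hT using Submodule.span_induction with
  | mem T hT =>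
    obtain ⟨⟨s, t⟩, rfl⟩ := hT
    have translate_eq : (fun x => ∫ y, h (x - s) * g (y - t) * θ y ∂ν)
        = (∫ y, g (y - t) * θ y ∂ν) • fun x => h (x - s) := by
      funext x
      simp_rw [mul_assoc, integral_const_mul, Pi.smul_apply, smul_eq_mul, mul_comm]
    refine ⟨fun x => ?_, ?_⟩
    · simp_rw [mul_assoc]
      exact (hgθ t).const_mul (h (x - s))
    · exact translate_eq ▸ Submodule.smul_mem _ _ (Submodule.subset_span ⟨s, rfl⟩)
  | zero =>
    simp only [Pi.zero_apply, zero_mul, integral_zero]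
    exact ⟨fun _ => integrable_zero _ _ _, Submodule.zero_mem _⟩
  | add T₁ T₂ _ _ ih₁ ih₂ =>
    have hint : ∀ x, Integrable (fun y => (T₁ + T₂) (x, y) * θ y) ν := fun x => by
      simp_rw [Pi.add_apply, add_mul]
      exact (ih₁.1 x).add (ih₂.1 x)
    refine ⟨hint, ?_⟩
    have sum_eq : (fun x => ∫ y, (T₁ + T₂) (x, y) * θ y ∂ν)
        = (fun x => ∫ y, T₁ (x, y) * θ y ∂ν) + fun x => ∫ y, T₂ (x, y) * θ y ∂ν := by
      funext x
      simp_rw [Pi.add_apply, add_mul]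
      exact integral_add (ih₁.1 x) (ih₂.1 x)
    exact sum_eq ▸ Submodule.add_mem _ ih₁.2 ih₂.2
  | smul c T _ ih =>
    refine ⟨fun x => ?_, ?_⟩
    · simp_rw [Pi.smul_apply, smul_eq_mul, mul_assoc]
      exact (ih.1 x).const_mul c
    · have smul_eq : (fun x => ∫ y, (c • T) (x, y) * θ y ∂ν)
          = c • fun x => ∫ y, T (x, y) * θ y ∂ν := by
        funext x
        simp_rw [Pi.smul_apply, smul_eq_mul, mul_assoc, integral_const_mul]
      exact smul_eq ▸ Submodule.smul_mem _ c ih.2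

end Translates

end MeasureTheory

theorem pReg1_iff {p : ℝ≥0∞} {f : ℝ → ℂ} (hf : MemLp f p volume) :
    pReg1 p f ↔ ∀ u, MemLp u p volume → u ∈ lpClosure p volume (translateSpan f) := by
  refine forall₂_congr fun u hu => ?_
  rw [mem_lpClosure_iff fun v => memLp_of_mem_translateSpan hf, and_iff_right hu]
  rfl

theorem pReg2_iff {p : ℝ≥0∞} {f : ℝ × ℝ → ℂ} (hf : MemLp f p volume) :
    pReg2 p f ↔ ∀ u, MemLp u p volume → u ∈ lpClosure p volume (translateSpan f) := by
  refine forall₂_congr fun u hu => ?_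
  rw [mem_lpClosure_iff fun v => memLp_of_mem_translateSpan hf, and_iff_right hu]
  rfl

def openBoxes : Set (Set (ℝ × ℝ)) := {s | ∃ a b c d : ℝ, s = Ioo a b ×ˢ Ioo c d}

theorem isTopologicalBasis_openBoxes : IsTopologicalBasis openBoxes := by
  refine isTopologicalBasis_of_isOpen_of_nhds ?_ fun z U hz hU => ?_
  · rintro _ ⟨a, b, c, d, rfl⟩
    exact isOpen_Ioo.prod isOpen_Ioo
  · obtain ⟨r, hr, hrU⟩ := Metric.isOpen_iff.1 hU z hz
    refine ⟨_, ⟨z.1 - r, z.1 + r, z.2 - r, z.2 + r, rfl⟩, ?_⟩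
    rw [← Real.ball_eq_Ioo, ← Real.ball_eq_Ioo, ball_prod_same]
    exact ⟨Metric.mem_ball_self hr, hrU⟩

theorem inter_mem_openBoxes {s t : Set (ℝ × ℝ)} (hs : s ∈ openBoxes) (ht : t ∈ openBoxes) :
    s ∩ t ∈ openBoxes := by
  obtain ⟨a, b, c, d, rfl⟩ := hs
  obtain ⟨a', b', c', d', rfl⟩ := ht
  exact ⟨a ⊔ a', b ⊓ b', c ⊔ c', d ⊓ d', by rw [prod_inter_prod, Ioo_inter_Ioo, Ioo_inter_Ioo]⟩

theorem pReg2.comp_swap {p : ℝ≥0∞} {f : ℝ × ℝ → ℂ} (H : pReg2 p f) :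
    pReg2 p fun z => f z.swap := by
  intro u hu ε hε
  have hswap : MeasurePreserving Prod.swap (volume : Measure (ℝ × ℝ)) volume :=
    Measure.measurePreserving_swap
  obtain ⟨T, hT, hlt⟩ := H _ (hu.comp_measurePreserving hswap) ε hε
  refine ⟨fun z => T z.swap, comp_swap_mem_translateSpan hT, ?_⟩
  have hemb : MeasurableEmbedding (Prod.swap : ℝ × ℝ → ℝ × ℝ) :=
    MeasurableEquiv.prodComm.measurableEmbedding
  rwa [← hswap.map_eq, hemb.eLpNorm_map_measure]

theorem pReg2_mul_of_pReg1 {p : ℝ≥0∞} (hp0 : p ≠ 0) (hp : p ≠ ∞) {h g : ℝ → ℂ}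
    (hh : MemLp h p volume) (hg : MemLp g p volume) (Hh : pReg1 p h) (Hg : pReg1 p g) :
    pReg2 p fun z : ℝ × ℝ => h z.1 * g z.2 := by
  rw [pReg1_iff hh] at Hh
  rw [pReg1_iff hg] at Hg
  rw [pReg2_iff (hh.mul_prod hp hg)]
  intro u hu
  refine mem_lpClosure_of_isTopologicalBasis hp0 hp isTopologicalBasis_openBoxes
    (fun s hs t ht => inter_mem_openBoxes hs ht) ?_ hu
  rintro _ ⟨a, b, c, d, rfl⟩
  have hbox : (Ioo a b ×ˢ Ioo c d).indicator (fun _ => (1 : ℂ))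
      = fun z => (Ioo a b).indicator 1 z.1 * (Ioo c d).indicator 1 z.2 :=
    funext fun z => indicator_prod_one
  have hIoo : ∀ a b : ℝ, MemLp ((Ioo a b).indicator (1 : ℝ → ℂ)) p volume := fun a b =>
    memLp_indicator_const p measurableSet_Ioo (1 : ℂ) (Or.inr measure_Ioo_lt_top.ne)
  rw [hbox]
  exact mul_prod_mem_lpClosure hp (fun _ ha _ hb => mul_prod_mem_translateSpan ha hb)
    (Hh _ (hIoo a b)) (Hg _ (hIoo c d))

def unitIntervalIndicator : ℝ → ℂ := (Icc (0 : ℝ) 1).indicator fun _ => 1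

theorem memLp_unitIntervalIndicator (r : ℝ≥0∞) : MemLp unitIntervalIndicator r volume :=
  memLp_indicator_const r measurableSet_Icc (1 : ℂ) (Or.inr measure_Icc_lt_top.ne)

theorem unitIntervalIndicator_mul_self (y : ℝ) :
    unitIntervalIndicator y * unitIntervalIndicator y = unitIntervalIndicator y := by
  by_cases hy : y ∈ Icc (0 : ℝ) 1 <;> simp [unitIntervalIndicator, hy]

theorem integral_unitIntervalIndicator : ∫ y, unitIntervalIndicator y = 1 := by
  simp [unitIntervalIndicator, integral_indicator_const (1 : ℂ) measurableSet_Icc]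

theorem eLpNorm_unitIntervalIndicator {r : ℝ≥0∞} (hr0 : r ≠ 0) (hr : r ≠ ∞) :
    eLpNorm unitIntervalIndicator r volume = 1 := by
  rw [unitIntervalIndicator, eLpNorm_indicator_const measurableSet_Icc hr0 hr]
  simp

theorem pReg1_of_pReg2_mul {p : ℝ} (hp : 1 < p) {h g : ℝ → ℂ} (hg1 : Integrable g volume)
    (hf : MemLp (fun z : ℝ × ℝ => h z.1 * g z.2) (ENNReal.ofReal p) volume)
    (H : pReg2 (ENNReal.ofReal p) fun z : ℝ × ℝ => h z.1 * g z.2) :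
    pReg1 (ENNReal.ofReal p) h := by
  intro u hu ε hε
  have hpq := Real.HolderConjugate.conjExponent hp
  set θ := unitIntervalIndicator
  have hθ_sq : ∀ y, θ y * θ y = θ y := unitIntervalIndicator_mul_self
  set U : ℝ × ℝ → ℂ := fun z => u z.1 * θ z.2
  have hU : MemLp U (ENNReal.ofReal p) volume :=
    hu.mul_prod ENNReal.ofReal_ne_top (memLp_unitIntervalIndicator _)
  obtain ⟨T, hT, hlt⟩ := H U hU ε hε
  obtain ⟨hTθ, hΦ⟩ := integral_mul_mem_translateSpan
    (fun t => (hg1.comp_sub_right t).mul_of_top_left (memLp_unitIntervalIndicator ⊤)) hT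
  refine ⟨_, hΦ, lt_of_le_of_lt ?_ hlt⟩
  have hUθ : ∀ x, ∫ y, U (x, y) * θ y = u x := fun x => by
    simp_rw [U, mul_assoc, hθ_sq, integral_const_mul]
    rw [integral_unitIntervalIndicator, mul_one]
  have sub_eq : u - (fun x => ∫ y, T (x, y) * θ y) = fun x => ∫ y, (U - T) (x, y) * θ y := by
    funext x
    have hUθ_int : Integrable (fun y => U (x, y) * θ y) volume := by
      simp_rw [U, mul_assoc, hθ_sq]
      exact (memLp_one_iff_integrable.1 (memLp_unitIntervalIndicator 1)).const_mul _
    simp_rw [Pi.sub_apply, sub_mul]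
    rw [integral_sub hUθ_int (hTθ x), hUθ]
  calc eLpNorm (u - fun x => ∫ y, T (x, y) * θ y) (ENNReal.ofReal p) volume
      ≤ eLpNorm (U - T) (ENNReal.ofReal p) volume
          * eLpNorm θ (ENNReal.ofReal (p.conjExponent)) volume := by
        rw [sub_eq]
        exact eLpNorm_integral_mul_le hpq (hU.sub (memLp_of_mem_translateSpan hf hT)).1
          (memLp_unitIntervalIndicator _)
    _ = eLpNorm (U - T) (ENNReal.ofReal p) volume := by
        rw [eLpNorm_unitIntervalIndicator (by simpa using hpq.symm.pos) ENNReal.ofReal_ne_top,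
          mul_one]

/-- for `1 < p < ∞` and `h, g ∈ L¹(ℝ) ∩ L^p(ℝ)`, the product function
`f(q,p) = h(q)g(p)` lies in `L¹(ℝ²) ∩ L^p(ℝ²)`, and the span of its translates is dense
in `L^p(ℝ²)` iff the spans of the translates of `h` and of `g` are both dense in
`L^p(ℝ)`. -/
theorem product_function_pRegular
    (p : ℝ) (hp : 1 < p) (h g : ℝ → ℂ)
    (hh1 : Integrable h volume) (hhp : MemLp h (ENNReal.ofReal p) volume)
    (hg1 : Integrable g volume) (hgp : MemLp g (ENNReal.ofReal p) volume) :
    Integrable (fun z : ℝ × ℝ => h z.1 * g z.2) volume ∧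
    MemLp (fun z : ℝ × ℝ => h z.1 * g z.2) (ENNReal.ofReal p) volume ∧
    (pReg2 (ENNReal.ofReal p) (fun z : ℝ × ℝ => h z.1 * g z.2) ↔
      (pReg1 (ENNReal.ofReal p) h ∧ pReg1 (ENNReal.ofReal p) g)) := by
  have hp_top : ENNReal.ofReal p ≠ ∞ := ENNReal.ofReal_ne_top
  have hp0 : ENNReal.ofReal p ≠ 0 := by simpa using zero_lt_one.trans hp
  refine ⟨hh1.mul_prod hg1, hhp.mul_prod hp_top hgp, fun H => ⟨?_, ?_⟩,
    fun ⟨Hh, Hg⟩ => pReg2_mul_of_pReg1 hp0 hp_top hhp hgp Hh Hg⟩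
  · exact pReg1_of_pReg2_mul hp hg1 (hhp.mul_prod hp_top hgp) H
  · have hswap : (fun z : ℝ × ℝ => h z.swap.1 * g z.swap.2) = fun z => g z.1 * h z.2 :=
      funext fun z => mul_comm _ _
    exact pReg1_of_pReg2_mul hp hh1 (hgp.mul_prod hp_top hhp) (hswap ▸ H.comp_swap)
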